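/- Let C be a category of partitions containing the four block partition ⊓⊓. Let p ∈ P(0,n) be written as the word a_{i(1)}^{k(1)} a_{i(2)}^{k(2)} … a_{i(m)}^{k(m)} with a_{i(j)} ≠ a_{i(j+1)} for all j, and define p' := a_{i(1)}^{k(1)'} … a_{i(m)}^{k(m)'}, where k(j)' = 1 if k(j) is odd and k(j)' = 2 if k(j) is even. Then p ∈ C if and only if p' ∈ C. -/
import Mathlib


/-!
Basic combinatorics of categories of partitions (Banica–Speicher easy quantum groups).

A partition with `k` upper and `l` lower points is encoded as an equivalence
relation (a `Setoid`) on the set `Fin k ⊕ Fin l` of its points; its blocks are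
the equivalence classes.
-/

namespace EasyQG

/-- A partition of `k` upper and `l` lower points into blocks. -/
abbrev Partition (k l : ℕ) : Type := Setoid (Fin k ⊕ Fin l)

/-- The relation "lying in the same block" of a partition. -/
def inSameBlock {k l : ℕ} (p : Partition k l) :
    (Fin k ⊕ Fin l) → (Fin k ⊕ Fin l) → Prop :=
  @Setoid.r _ p

/-- The partition in `P(0,n)` associated to a word: two points lie in the same
block iff they carry the same letter. -/
def ofWord {n : ℕ} (w : Fin n → ℕ) : Partition 0 n :=
  Setoid.ker (Sum.elim Fin.elim0 w)

/-- The partition in `P(0,n)` associated to a word given as a list of letters. -/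
def ofList (w : List ℕ) : Partition 0 w.length :=
  ofWord w.get

/-- The identity partition `|` in `P(1,1)`: one upper point joined to one lower point. -/
def idPartition : Partition 1 1 := ⊤

/-- The pair partition `⊓` in `P(0,2)`: two points in one block. -/
def pairPartition : Partition 0 2 := ⊤

/-- The double singleton `↓⊗↓` in `P(0,2)`: two points in two different blocks. -/
def doubleSingleton : Partition 0 2 := ⊥

/-- The four block partition `⊓⊓` in `P(0,4)`: four points in one block (word `aaaa`). -/
def fourBlock : Partition 0 4 := ⊤

/-- The fat crossing partition in `P(4,4)`, with blocks `{1,2,3',4'}` and `{3,4,1',2'}`. -/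
def fatCross : Partition 4 4 :=
  Setoid.ker (Sum.elim (fun i => decide (i.val < 2)) (fun j => decide (2 ≤ j.val)))

/-- The pair positioner partition in `P(3,3)`, with blocks `{1,2,2',3'}` and `{3,1'}`. -/
def pairPositioner : Partition 3 3 :=
  Setoid.ker (Sum.elim (fun i => decide (i.val < 2)) (fun j => decide (1 ≤ j.val)))

/-- The `s`-mixing partition `h_s ∈ P(0,2s)`, the word `abab…ab` of length `2s`. -/
def sMixing (s : ℕ) : Partition 0 (2 * s) := ofWord (fun i => i.val % 2)

/-- The partition `π_k ∈ P(0,4k)`, the word `a₁…a_k a_k…a₁ a₁…a_k a_k…a₁`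
in `k` distinct letters. -/
def piPartition (k : ℕ) : Partition 0 (4 * k) :=
  ofWord (fun i =>
    if i.val % (2 * k) < k then i.val % (2 * k) else 2 * k - 1 - i.val % (2 * k))

/-- The disjoint sum of two set partitions. -/
def sumSetoid {α β : Type*} (ra : Setoid α) (rb : Setoid β) : Setoid (α ⊕ β) where
  r := Sum.LiftRel (@Setoid.r _ ra) (@Setoid.r _ rb)
  iseqv := by
    constructor
    · intro x
      cases x with
      | inl a => exact Sum.LiftRel.inl (ra.iseqv.refl a)
      | inr b => exact Sum.LiftRel.inr (rb.iseqv.refl b)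
    · intro x y h
      cases h with
      | inl h => exact Sum.LiftRel.inl (ra.iseqv.symm h)
      | inr h => exact Sum.LiftRel.inr (rb.iseqv.symm h)
    · intro x y z h1 h2
      cases h1 with
      | inl h1 => cases h2 with
        | inl h2 => exact Sum.LiftRel.inl (ra.iseqv.trans h1 h2)
      | inr h1 => cases h2 with
        | inr h2 => exact Sum.LiftRel.inr (rb.iseqv.trans h1 h2)

/-- Tensor product (horizontal concatenation) of partitions. -/
def tensor {k l k' l' : ℕ} (p : Partition k l) (q : Partition k' l') :
    Partition (k + k') (l + l') :=
  Setoid.comap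
    (fun x => (Equiv.sumSumSumComm (Fin k) (Fin k') (Fin l) (Fin l'))
      (Sum.map finSumFinEquiv.symm finSumFinEquiv.symm x))
    (sumSetoid p q)

/-- Composition (vertical concatenation) of partitions `p ∈ P(k,l)` and `q ∈ P(l,m)`:
blocks are joined along the `l` middle points, which are then deleted. -/
def comp {k l m : ℕ} (p : Partition k l) (q : Partition l m) : Partition k m :=
  Setoid.comap (Sum.map id Sum.inr)
    (Relation.EqvGen.setoid (fun x y : Fin k ⊕ (Fin l ⊕ Fin m) =>
      (∃ a b, inSameBlock p a b ∧ Sum.map id Sum.inl a = x ∧ Sum.map id Sum.inl b = y) ∨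
      (∃ a b, inSameBlock q a b ∧ Sum.inr a = x ∧ Sum.inr b = y)))

/-- Involution (turning a partition upside down). -/
def involution {k l : ℕ} (p : Partition k l) : Partition l k :=
  Setoid.comap Sum.swap p

/-- Rotation moving the leftmost upper point to the left end of the lower row. -/
def rotUL {k l : ℕ} (p : Partition (k + 1) l) : Partition k (l + 1) :=
  Setoid.comap
    (Sum.elim (fun i => Sum.inl i.succ)
      (fun j => Fin.cases (Sum.inl (0 : Fin (k + 1))) (fun j' => Sum.inr j') j)) p

/-- Rotation moving the leftmost lower point to the left end of the upper row. -/
def rotLU {k l : ℕ} (p : Partition k (l + 1)) : Partition (k + 1) l :=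
  Setoid.comap
    (Sum.elim (fun i => Fin.cases (Sum.inr (0 : Fin (l + 1))) (fun i' => Sum.inl i') i)
      (fun j => Sum.inr j.succ)) p

/-- Rotation moving the rightmost upper point to the right end of the lower row. -/
def rotUR {k l : ℕ} (p : Partition (k + 1) l) : Partition k (l + 1) :=
  Setoid.comap
    (Sum.elim (fun i => Sum.inl i.castSucc)
      (fun j => Fin.lastCases (Sum.inl (Fin.last k)) (fun j' => Sum.inr j') j)) p

/-- Rotation moving the rightmost lower point to the right end of the upper row. -/
def rotRU {k l : ℕ} (p : Partition k (l + 1)) : Partition (k + 1) l :=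
  Setoid.comap
    (Sum.elim (fun i => Fin.lastCases (Sum.inr (Fin.last l)) (fun i' => Sum.inl i') i)
      (fun j => Sum.inr j.castSucc)) p

/-- A category of partitions: a collection of partitions containing the identity
partition and closed under the category operations (tensor product, composition,
involution and the four rotations). -/
structure PartitionCategory where
  mem : Set (Σ k l : ℕ, Partition k l)
  id_mem : ⟨1, 1, idPartition⟩ ∈ mem
  tensor_mem : ∀ {k l k' l' : ℕ} {p : Partition k l} {q : Partition k' l'},
    ⟨k, l, p⟩ ∈ mem → ⟨k', l', q⟩ ∈ mem → ⟨k + k', l + l', tensor p q⟩ ∈ mem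
  comp_mem : ∀ {k l m : ℕ} {p : Partition k l} {q : Partition l m},
    ⟨k, l, p⟩ ∈ mem → ⟨l, m, q⟩ ∈ mem → ⟨k, m, comp p q⟩ ∈ mem
  involution_mem : ∀ {k l : ℕ} {p : Partition k l},
    ⟨k, l, p⟩ ∈ mem → ⟨l, k, involution p⟩ ∈ mem
  rotUL_mem : ∀ {k l : ℕ} {p : Partition (k + 1) l},
    ⟨k + 1, l, p⟩ ∈ mem → ⟨k, l + 1, rotUL p⟩ ∈ mem
  rotLU_mem : ∀ {k l : ℕ} {p : Partition k (l + 1)},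
    ⟨k, l + 1, p⟩ ∈ mem → ⟨k + 1, l, rotLU p⟩ ∈ mem
  rotUR_mem : ∀ {k l : ℕ} {p : Partition (k + 1) l},
    ⟨k + 1, l, p⟩ ∈ mem → ⟨k, l + 1, rotUR p⟩ ∈ mem
  rotRU_mem : ∀ {k l : ℕ} {p : Partition k (l + 1)},
    ⟨k, l + 1, p⟩ ∈ mem → ⟨k + 1, l, rotRU p⟩ ∈ mem

/-- The members of the smallest category of partitions containing `S`
(the category `⟨S⟩` generated by `S`). -/
def generated (S : Set (Σ k l : ℕ, Partition k l)) : Set (Σ k l : ℕ, Partition k l) :=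
  {x | ∀ C : PartitionCategory, S ⊆ C.mem → x ∈ C.mem}

/-- A category of partitions is hyperoctahedral if it contains the four block
partition `⊓⊓` but not the double singleton `↓⊗↓`. -/
def Hyperoctahedral (C : PartitionCategory) : Prop :=
  (⟨0, 4, fourBlock⟩ : Σ k l : ℕ, Partition k l) ∈ C.mem ∧
    (⟨0, 2, doubleSingleton⟩ : Σ k l : ℕ, Partition k l) ∉ C.mem

/-- A category of partitions is group-theoretical if it contains the pair
positioner partition. -/
def GroupTheoretical (C : PartitionCategory) : Prop :=
  (⟨3, 3, pairPositioner⟩ : Σ k l : ℕ, Partition k l) ∈ C.mem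

/-- The generating set `{π_l | 1 ≤ l ≤ k}`. -/
def piUpTo (k : ℕ) : Set (Σ k l : ℕ, Partition k l) :=
  {x | ∃ l : ℕ, 1 ≤ l ∧ l ≤ k ∧ x = ⟨0, 4 * l, piPartition l⟩}

/-- The generating set `{π_l | l ∈ ℕ, l ≥ 1}`. -/
def piAll : Set (Σ k l : ℕ, Partition k l) :=
  {x | ∃ l : ℕ, 1 ≤ l ∧ x = ⟨0, 4 * l, piPartition l⟩}

end EasyQG
namespace EasyQG

/-- Merging the blocks of the points `x` and `y` of a partition. -/
def merge {k l : ℕ} (p : Partition k l) (x y : Fin k ⊕ Fin l) : Partition k l :=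
  Relation.EqvGen.setoid (fun u v => inSameBlock p u v ∨ (u = x ∧ v = y) ∨ (u = y ∧ v = x))

/-- The word `a_{i(1)}^{k(1)} … a_{i(m)}^{k(m)}` determined by a list of
letters with exponents. -/
def expand (blocks : List (ℕ × ℕ)) : List ℕ :=
  (blocks.map fun be => List.replicate be.2 be.1).flatten

/-- The run decomposition of a word: the list of its (letter, exponent) blocks. -/
def runs : List ℕ → List (ℕ × ℕ)
  | [] => []
  | a :: rest =>
    match runs rest with
    | [] => [(a, 1)]
    | (b, e) :: rs => if a = b then (b, e + 1) :: rs else (a, 1) :: (b, e) :: rs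

/-- The single-double leg form associated to a word: every odd exponent is
replaced by `1` and every even exponent by `2`. -/
def sdForm (w : List ℕ) : List ℕ :=
  expand ((runs w).map fun be => (be.1, if Odd be.2 then 1 else 2))

/-- A word is in single-double leg form if all its exponents are `1` or `2`. -/
def IsSingleDoubleLegForm (w : List ℕ) : Prop :=
  ∃ blocks : List (ℕ × ℕ), List.Chain' (fun x y => x.1 ≠ y.1) blocks ∧
    (∀ b ∈ blocks, b.2 = 1 ∨ b.2 = 2) ∧ w = expand blocks

/-- The vertical reflection of a partition: the left-to-right order of the
points is reversed in both rows, keeping the block structure. -/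
def verticalReflect {k l : ℕ} (p : Partition k l) : Partition k l :=
  Setoid.comap (Sum.map Fin.rev Fin.rev) p

/-- `leg [a₁,…,a_k] [X₁,…,X_{k-1}] = a₁ X₁ a₂ X₂ … a_{k-1} X_{k-1} a_k`:
a list of letters interleaved with filler words. -/
def leg : List ℕ → List (List ℕ) → List ℕ
  | [], _ => []
  | [a], _ => [a]
  | a :: rest, Xs => a :: (Xs.headD [] ++ leg rest Xs.tail)

/-- A word contains a W of depth `k` if it can be written as
`Y₁ S_α X_k^α S_β Y₂ S_γ X_k^γ S_δ Y₃`, where `S_α = a₁X₁^α a₂X₂^α…a_k`,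
`S_β = a_k X_{k-1}^β…X₁^β a₁`, `S_γ = a₁X₁^γ…a_k`, `S_δ = a_k X_{k-1}^δ…X₁^δ a₁`
for `k` distinct letters `a₁,…,a_k`, each of which occurs an odd number of
times in each of `S_α`, `S_β`, `S_γ`, `S_δ`. -/
def ContainsW (w : List ℕ) (k : ℕ) : Prop :=
  ∃ (as : List ℕ) (Xa Xb Xc Xd : List (List ℕ)) (Xka Xkc Y1 Y2 Y3 : List ℕ),
    as.length = k ∧ as.Nodup ∧
    Xa.length = k - 1 ∧ Xb.length = k - 1 ∧ Xc.length = k - 1 ∧ Xd.length = k - 1 ∧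
    w = Y1 ++ leg as Xa ++ Xka ++ leg as.reverse Xb ++ Y2 ++
        leg as Xc ++ Xkc ++ leg as.reverse Xd ++ Y3 ∧
    ∀ a ∈ as, Odd ((leg as Xa).count a) ∧ Odd ((leg as.reverse Xb).count a) ∧
      Odd ((leg as Xc).count a) ∧ Odd ((leg as.reverse Xd).count a)

/-- `wdepth w` is the maximal `k` such that some rotated version of the
word `w` contains a W of depth `k`. -/
noncomputable def wdepth (w : List ℕ) : ℕ :=
  sSup {k | ∃ r : ℕ, ContainsW (w.rotate r) k}

end EasyQG


namespace EasyQG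

section Aux

lemma ker_comap {α β γ : Type*} (f : α → β) (g : β → γ) :
    Setoid.comap f (Setoid.ker g) = Setoid.ker (g ∘ f) :=
  Setoid.ext fun _ _ => Iff.rfl

lemma comap_comap {α β γ : Type*} (f : α → β) (g : β → γ) (s : Setoid γ) :
    Setoid.comap f (Setoid.comap g s) = Setoid.comap (g ∘ f) s :=
  Setoid.ext fun _ _ => Iff.rfl

lemma comap_id {α : Type*} (s : Setoid α) : Setoid.comap id s = s :=
  Setoid.ext fun _ _ => Iff.rfl

lemma comap_top {α β : Type*} (f : α → β) : Setoid.comap f (⊤ : Setoid β) = ⊤ :=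
  Setoid.ext fun _ _ => by simp [Setoid.comap, Setoid.top_def]

lemma rotUL_rotLU {k l : ℕ} (p : Partition k (l + 1)) : rotUL (rotLU p) = p := by
  unfold rotUL rotLU
  rw [comap_comap]
  have : (Sum.elim (fun i : Fin (k+1) => Fin.cases (Sum.inr (0 : Fin (l + 1))) (fun i' => Sum.inl i') i)
      (fun j : Fin l => Sum.inr j.succ)) ∘
      (Sum.elim (fun i : Fin k => Sum.inl i.succ)
      (fun j : Fin (l+1) => Fin.cases (Sum.inl (0 : Fin (k + 1))) (fun j' => Sum.inr j') j))
      = id := by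
    funext z
    cases z with
    | inl i => simp
    | inr j =>
      induction j using Fin.cases with
      | zero => simp
      | succ j' => simp
  rw [this, comap_id]

lemma top_block {k l : ℕ} (a b : Fin k ⊕ Fin l) : inSameBlock (⊤ : Partition k l) a b := by
  simp [inSameBlock, Setoid.top_def]

lemma comp_top_ker {k l m : ℕ} {β : Type*} (G : Fin l ⊕ Fin m → β) (i₀ : Fin l)
    (hG : ∀ i, G (Sum.inl i) = G (Sum.inl i₀)) :
    comp (⊤ : Partition k l) (Setoid.ker G) =
      Setoid.ker (Sum.elim (fun _ : Fin k => G (Sum.inl i₀))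
        (fun j : Fin m => G (Sum.inr j))) := by
  set R := (fun x y : Fin k ⊕ (Fin l ⊕ Fin m) =>
      (∃ a b, inSameBlock (⊤ : Partition k l) a b ∧
        Sum.map id Sum.inl a = x ∧ Sum.map id Sum.inl b = y) ∨
      (∃ a b, inSameBlock (Setoid.ker G) a b ∧ Sum.inr a = x ∧ Sum.inr b = y)) with hR
  set H : Fin k ⊕ (Fin l ⊕ Fin m) → β :=
    Sum.elim (fun _ => G (Sum.inl i₀))
      (Sum.elim (fun _ => G (Sum.inl i₀)) (fun j => G (Sum.inr j))) with hH
  have key : Relation.EqvGen.setoid R = Setoid.ker H := by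
    apply Setoid.ext
    intro x y
    constructor
    · intro h
      have h' : Relation.EqvGen R x y := h
      clear h
      induction h' with
      | rel x y hr =>
        rcases hr with ⟨a, b, _, rfl, rfl⟩ | ⟨a, b, hab, rfl, rfl⟩
        · cases a <;> cases b <;> exact rfl
        · have hab' : G a = G b := hab
          cases a with
          | inl i => cases b with
            | inl i' => exact rfl
            | inr j => exact (hG i).symm.trans hab'
          | inr j => cases b with
            | inl i' => exact ((hG i').symm.trans hab'.symm).symm
            | inr j' => exact hab'
      | refl x => rfl
      | symm x y _ ih => exact ih.symm
      | trans x y z _ _ ih1 ih2 => exact ih1.trans ih2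
    · intro h
      have h' : H x = H y := h
      show Relation.EqvGen R x y
      have relmid : ∀ u : Fin k ⊕ Fin l, Relation.EqvGen R (Sum.map id Sum.inl u)
          (Sum.inr (Sum.inl i₀)) := fun u =>
        Relation.EqvGen.rel _ _ (Or.inl ⟨u, Sum.inr i₀, top_block _ _, rfl, rfl⟩)
      have rellow : ∀ j : Fin m, G (Sum.inl i₀) = G (Sum.inr j) →
          Relation.EqvGen R (Sum.inr (Sum.inl i₀)) (Sum.inr (Sum.inr j)) := fun j hj =>
        Relation.EqvGen.rel _ _ (Or.inr ⟨Sum.inl i₀, Sum.inr j, hj, rfl, rfl⟩)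
      have reach : ∀ z : Fin k ⊕ (Fin l ⊕ Fin m),
          (Relation.EqvGen R z (Sum.inr (Sum.inl i₀)) ∧ H z = G (Sum.inl i₀)) ∨
          (∃ j, z = Sum.inr (Sum.inr j)) := by
        intro z
        cases z with
        | inl u => exact Or.inl ⟨relmid (Sum.inl u), rfl⟩
        | inr w => cases w with
          | inl i => exact Or.inl ⟨relmid (Sum.inr i), rfl⟩
          | inr j => exact Or.inr ⟨j, rfl⟩
      -- main casework
      rcases reach x with ⟨hx, hx2⟩ | ⟨jx, rfl⟩ <;> rcases reach y with ⟨hy, hy2⟩ | ⟨jy, rfl⟩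
      · exact Relation.EqvGen.trans _ _ _ hx (Relation.EqvGen.symm _ _ hy)
      · have hGy : G (Sum.inl i₀) = G (Sum.inr jy) := hx2 ▸ h'
        exact Relation.EqvGen.trans _ _ _ hx (rellow _ hGy)
      · have hGx : G (Sum.inl i₀) = G (Sum.inr jx) := hy2 ▸ h'.symm
        exact Relation.EqvGen.trans _ _ _ (Relation.EqvGen.symm _ _ (rellow _ hGx)) (Relation.EqvGen.symm _ _ hy)
      · have : G (Sum.inr jx) = G (Sum.inr jy) := h'
        exact Relation.EqvGen.rel _ _ (Or.inr ⟨Sum.inr jx, Sum.inr jy, this, rfl, rfl⟩)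
  show Setoid.comap _ _ = _
  rw [key, ker_comap]
  congr 1
  funext z
  cases z with
  | inl u => rfl
  | inr j => rfl



def memW (C : PartitionCategory) (w : List ℕ) : Prop :=
  (⟨0, w.length, ofList w⟩ : Σ k l : ℕ, Partition k l) ∈ C.mem

lemma rotLU_cons (x : ℕ) (w : List ℕ) :
    rotLU (ofList (x :: w)) =
      Setoid.ker (Sum.elim (fun _ : Fin 1 => x) (fun j : Fin w.length => w.get j)) := by
  unfold rotLU ofList ofWord
  rw [ker_comap]
  congr 1
  funext z
  cases z with
  | inl i =>
    have : i = 0 := by apply Fin.ext; omega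
    subst this
    simp [Function.comp, Fin.cases_zero, List.get]
  | inr j => simp [Function.comp, List.get]

lemma rotLU3_cons (a : ℕ) (w : List ℕ) :
    rotLU (rotLU (rotLU (ofList (a :: a :: a :: w)))) =
      Setoid.ker (Sum.elim (fun _ : Fin 3 => a) (fun j : Fin w.length => w.get j)) := by
  unfold rotLU ofList ofWord
  rw [comap_comap, comap_comap, ker_comap]
  congr 1
  funext z
  cases z with
  | inl i => fin_cases i <;> rfl
  | inr j => rfl

lemma rotUR_rotLU_cons (x : ℕ) (w : List ℕ) :
    rotUR (rotLU (ofList (x :: w))) =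
      ofWord (fun j : Fin (w.length + 1) =>
        Fin.lastCases x (fun j' : Fin w.length => w.get j') j) := by
  rw [rotLU_cons]
  unfold rotUR ofWord
  rw [ker_comap]
  congr 1
  funext z
  cases z with
  | inl i => exact i.elim0
  | inr j =>
    induction j using Fin.lastCases with
    | last => simp [Function.comp]
    | cast j' => simp [Function.comp]

lemma memW_of_ofWord (C : PartitionCategory) {n : ℕ} (f : Fin n → ℕ) (w : List ℕ)
    (h : w.length = n) (hf : ∀ i : Fin n, f i = w.get (Fin.cast h.symm i)) :
    ((⟨0, n, ofWord f⟩ : Σ k l : ℕ, Partition k l) ∈ C.mem) ↔ memW C w := by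
  subst h
  have : f = w.get := funext fun i => by rw [hf]; rfl
  rw [this]
  exact Iff.rfl

lemma head_iff (C : PartitionCategory)
    (h4 : (⟨0, 4, fourBlock⟩ : Σ k l : ℕ, Partition k l) ∈ C.mem)
    (a : ℕ) (w : List ℕ) :
    memW C (a :: a :: a :: w) ↔ memW C (a :: w) := by
  have hf : (⟨1, 3, (⊤ : Partition 1 3)⟩ : Σ k l : ℕ, Partition k l) ∈ C.mem := by
    have h := C.rotLU_mem (p := fourBlock) h4
    have e : rotLU (fourBlock) = (⊤ : Partition 1 3) := by
      unfold rotLU fourBlock; exact comap_top _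
    rwa [e] at h
  have hg : (⟨3, 1, (⊤ : Partition 3 1)⟩ : Σ k l : ℕ, Partition k l) ∈ C.mem := by
    have h := C.involution_mem hf
    have e : involution (⊤ : Partition 1 3) = (⊤ : Partition 3 1) := by
      unfold involution; exact comap_top _
    rwa [e] at h
  constructor
  · intro hmem
    have hmem' : (⟨0, w.length + 3, ofList (a :: a :: a :: w)⟩ :
        Σ k l : ℕ, Partition k l) ∈ C.mem := hmem
    have h1 := C.rotLU_mem (C.rotLU_mem (C.rotLU_mem hmem'))
    rw [rotLU3_cons] at h1
    have h2 := C.comp_mem hf h1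
    have e2 : comp (⊤ : Partition 1 3)
        (Setoid.ker (Sum.elim (fun _ : Fin 3 => a) (fun j : Fin w.length => w.get j))) =
        rotLU (ofList (a :: w)) := by
      rw [comp_top_ker (Sum.elim (fun _ : Fin 3 => a) (fun j : Fin w.length => w.get j))
        (0 : Fin 3) (fun _ => rfl), rotLU_cons]
      rfl
    rw [e2] at h2
    have h3 := C.rotUL_mem h2
    rw [rotUL_rotLU] at h3
    exact h3
  · intro hmem
    have hmem' : (⟨0, w.length + 1, ofList (a :: w)⟩ :
        Σ k l : ℕ, Partition k l) ∈ C.mem := hmem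
    have h1 := C.rotLU_mem hmem'
    have h2 := C.comp_mem hg h1
    have e2 : comp (⊤ : Partition 3 1) (rotLU (ofList (a :: w))) =
        rotLU (rotLU (rotLU (ofList (a :: a :: a :: w)))) := by
      rw [rotLU_cons, comp_top_ker (Sum.elim (fun _ : Fin 1 => a) (fun j : Fin w.length => w.get j))
        (0 : Fin 1) (fun _ => rfl), rotLU3_cons]
      rfl
    rw [e2] at h2
    have h3 := C.rotUL_mem (C.rotUL_mem (C.rotUL_mem h2))
    rw [rotUL_rotLU, rotUL_rotLU, rotUL_rotLU] at h3
    exact h3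

lemma rot_one (C : PartitionCategory) (x : ℕ) (w : List ℕ) :
    memW C (x :: w) → memW C (w ++ [x]) := by
  intro h
  have h' : (⟨0, w.length + 1, ofList (x :: w)⟩ : Σ k l : ℕ, Partition k l) ∈ C.mem := h
  have h1 := C.rotUR_mem (C.rotLU_mem h')
  rw [rotUR_rotLU_cons] at h1
  refine (memW_of_ofWord C _ (w ++ [x]) (by simp) ?_).mp h1
  intro i
  induction i using Fin.lastCases with
  | last =>
    simp [Fin.lastCases_last, List.get]
  | cast j' =>
    simp [Fin.lastCases_castSucc, List.get, List.getElem_append]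

lemma rot_all (C : PartitionCategory) : ∀ u v : List ℕ, memW C (u ++ v) → memW C (v ++ u) := by
  intro u
  induction u with
  | nil =>
    intro v h
    rw [List.append_nil]
    simpa using h
  | cons x u' ih =>
    intro v h
    rw [List.cons_append] at h
    have h2 := rot_one C x (u' ++ v) h
    rw [List.append_assoc] at h2
    have h3 := ih (v ++ [x]) h2
    rw [List.append_assoc] at h3
    simpa using h3

lemma middle_iff (C : PartitionCategory)
    (h4 : (⟨0, 4, fourBlock⟩ : Σ k l : ℕ, Partition k l) ∈ C.mem)
    (u v : List ℕ) (a : ℕ) :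
    memW C (u ++ (a :: a :: a :: v)) ↔ memW C (u ++ (a :: v)) := by
  constructor
  · intro h
    have h1 := rot_all C u _ h
    rw [List.cons_append, List.cons_append, List.cons_append] at h1
    have h2 := (head_iff C h4 a (v ++ u)).mp h1
    rw [show a :: (v ++ u) = (a :: v) ++ u from rfl] at h2
    exact rot_all C _ u h2
  · intro h
    have h1 := rot_all C u _ h
    rw [List.cons_append] at h1
    have h2 := (head_iff C h4 a (v ++ u)).mpr h1
    rw [show a :: a :: a :: (v ++ u) = (a :: a :: a :: v) ++ u from rfl] at h2
    exact rot_all C _ u h2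

lemma replicate_iff (C : PartitionCategory)
    (h4 : (⟨0, 4, fourBlock⟩ : Σ k l : ℕ, Partition k l) ∈ C.mem)
    (u v : List ℕ) (a : ℕ) :
    ∀ k : ℕ, 1 ≤ k →
    (memW C (u ++ (List.replicate k a ++ v)) ↔
     memW C (u ++ (List.replicate (if Odd k then 1 else 2) a ++ v))) := by
  intro k
  induction k using Nat.strong_induction_on with
  | _ k ih =>
    match k with
    | 0 => intro h; omega
    | 1 => intro _; rw [if_pos (by decide : Odd 1)]
    | 2 => intro _; rw [if_neg (by decide : ¬ Odd 2)]
    | (k+3) =>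
      intro _
      have e1 : List.replicate (k+3) a ++ v = a :: a :: a :: (List.replicate k a ++ v) := by
        simp [List.replicate_succ]
      have e2 : List.replicate (k+1) a ++ v = a :: (List.replicate k a ++ v) := by
        simp [List.replicate_succ]
      have step : memW C (u ++ (List.replicate (k+3) a ++ v)) ↔
          memW C (u ++ (List.replicate (k+1) a ++ v)) := by
        rw [e1, e2]
        exact middle_iff C h4 u _ a
      rw [step]
      have h13 : Odd (k+3) ↔ Odd (k+1) := by
        simp only [Nat.odd_iff]
        omega
      have par : (if Odd (k+3) then 1 else 2) = (if Odd (k+1) then 1 else 2) := by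
        by_cases h : Odd (k+1)
        · rw [if_pos h, if_pos (h13.mpr h)]
        · rw [if_neg h, if_neg (fun hh => h (h13.mp hh))]
      rw [par]
      exact ih (k+1) (by omega) (by omega)

lemma main_aux (C : PartitionCategory)
    (h4 : (⟨0, 4, fourBlock⟩ : Σ k l : ℕ, Partition k l) ∈ C.mem) :
    ∀ blocks : List (ℕ × ℕ), (∀ b ∈ blocks, 0 < b.2) → ∀ pre : List ℕ,
    (memW C (pre ++ expand blocks) ↔
     memW C (pre ++ expand (blocks.map fun be => (be.1, if Odd be.2 then 1 else 2)))) := by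
  intro blocks
  induction blocks with
  | nil => intro _ pre; exact Iff.rfl
  | cons b bs ih =>
    intro hpos pre
    obtain ⟨a, k⟩ := b
    have hk : 1 ≤ k := hpos (a, k) (by simp)
    have e1 : expand ((a, k) :: bs) = List.replicate k a ++ expand bs := by
      simp [expand]
    have e2 : expand (((a, k) :: bs).map fun be => (be.1, if Odd be.2 then 1 else 2)) =
        List.replicate (if Odd k then 1 else 2) a ++
          expand (bs.map fun be => (be.1, if Odd be.2 then 1 else 2)) := by
      simp [expand]
    rw [e1, e2, replicate_iff C h4 pre (expand bs) a k hk,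
      ← List.append_assoc, ← List.append_assoc]
    exact ih (fun b hb => hpos b (by simp [hb])) (pre ++ List.replicate (if Odd k then 1 else 2) a)

end Aux

end EasyQG

namespace EasyQG

theorem statement5 (C : PartitionCategory)
    (h4 : (⟨0, 4, fourBlock⟩ : Σ k l : ℕ, Partition k l) ∈ C.mem)
    (blocks : List (ℕ × ℕ))
    (hchain : List.Chain' (fun x y => x.1 ≠ y.1) blocks)
    (hpos : ∀ b ∈ blocks, 0 < b.2) :
    (⟨0, _, ofList (expand blocks)⟩ : Σ k l : ℕ, Partition k l) ∈ C.mem ↔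
      (⟨0, _, ofList (expand (blocks.map fun be => (be.1, if Odd be.2 then 1 else 2)))⟩ :
        Σ k l : ℕ, Partition k l) ∈ C.mem := by
  exact main_aux C h4 blocks hpos []

end EasyQG
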